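/- There exist elements x, y, z of PSL(2,𝔽₁₁), each of order exactly 11, with x·y·z = 1 and such that {x, y, z} generates PSL(2,𝔽₁₁); that is, (0; 11, 11, 11) is a signature of PSL(2,𝔽₁₁). -/

import Mathlib

/-!
Take the unipotent elements `x = [[1, 2], [0, 1]]` and `y = [[1, 0], [-2, 1]]` of `SL(2, 𝔽_p)`,
`p` odd. Non-central transvections have order `p` in `PSL(2, 𝔽_p)`. The product `xy` has trace
`2 + 2 · (-2) = -2`, so by Cayley–Hamilton `(xy + 1)² = 0` and `(xy)^p = -1` in characteristic `p`;
hence `z = (xy)⁻¹` has order `p` in `PSL` too. Finally `SL(2, F)` is generated by the upper and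
lower transvections, and over a prime field each of these two families is the cyclic group
generated by any of its non-trivial members, so already `x` and `y` generate.
-/

open scoped MatrixGroups

namespace Matrix

lemma pow_char_eq_neg_one_of_trace_eq_neg_two {R : Type*} [CommRing R] (p : ℕ) [Fact p.Prime]
    [CharP R p] {M : Matrix (Fin 2) (Fin 2) R} (hdet : M.det = 1) (htr : M.trace = -2) :
    M ^ p = -1 := by
  have : Nontrivial R := CharP.nontrivial_of_char_ne_one (Fact.out : p.Prime).ne_one
  have hsq : (M + 1) ^ 2 = 0 := by
    have hCH := M.aeval_self_charpoly
    rw [charpoly_fin_two, htr, hdet] at hCH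
    simp only [map_neg, neg_mul, sub_neg_eq_add, map_one, map_add, map_pow, Polynomial.aeval_X,
      map_mul, Polynomial.aeval_C] at hCH
    rw [← hCH, map_ofNat]
    noncomm_ring
  calc M ^ p = (M + 1 - 1) ^ p := by rw [add_sub_cancel_right]
    _ = (M + 1) ^ p - 1 := by
      rw [sub_pow_char_of_commute (p := p) (h := Commute.one_right _), one_pow]
    _ = -1 := by rw [pow_eq_zero_of_le (Fact.out : p.Prime).two_le hsq, zero_sub]

namespace SpecialLinearGroup

variable {ι R : Type*} [Fintype ι] [DecidableEq ι] [CommRing R]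

lemma transvection_pow {i j : ι} (hij : i ≠ j) (b : R) (n : ℕ) :
    transvection hij b ^ n = transvection hij (n * b) := by
  induction n with
  | zero => simp
  | succ n ih => rw [pow_succ, ih, ← transvection_add, Nat.cast_succ, add_one_mul]

lemma transvection_mul_transvection_coe (b c : R) :
    ((transvection zero_ne_one b * transvection one_ne_zero c : SL(2, R)) :
      Matrix (Fin 2) (Fin 2) R) = !![1 + b * c, b; c, 1] := by
  ext i j
  fin_cases i <;> fin_cases j <;> simp [transvection_coe, Matrix.mul_apply, Fin.sum_univ_two]

lemma apply_eq_zero_of_mem_center {M : SpecialLinearGroup ι R}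
    (hM : M ∈ Subgroup.center (SpecialLinearGroup ι R)) {i j : ι} (hij : i ≠ j) : M i j = 0 := by
  rw [← scalar_eq_self_of_mem_center hM i]
  simp [hij]

variable {p : ℕ} [Fact p.Prime]

lemma transvection_mem_zpowers {i j : ι} (hij : i ≠ j) {b : ZMod p} (hb : b ≠ 0) (c : ZMod p) :
    transvection hij c ∈ Subgroup.zpowers (transvection hij b) := by
  simpa [transvection_pow, div_mul_cancel₀ c hb] using
    Subgroup.npow_mem_zpowers (transvection hij b) (c / b).val

lemma orderOf_mk_transvection {i j : ι} (hij : i ≠ j) {b : ZMod p} (hb : b ≠ 0) :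
    orderOf (transvection hij b : ProjectiveSpecialLinearGroup ι (ZMod p)) = p := by
  apply orderOf_eq_prime
  · rw [← QuotientGroup.mk_pow, transvection_pow, ZMod.natCast_self, zero_mul,
      transvection_coeff_zero, QuotientGroup.mk_one]
  · rwa [Ne, QuotientGroup.eq_one_iff, transvection_mem_center_iff]

lemma closure_transvection_pair_eq_top {b c : ZMod p} (hb : b ≠ 0) (hc : c ≠ 0) :
    Subgroup.closure {transvection zero_ne_one b, transvection one_ne_zero c} =
      (⊤ : Subgroup SL(2, ZMod p)) := by
  refine eq_top_iff.2 fun A _ ↦ SL2.transvection_induction _ (fun i j hij a ↦ ?_)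
    (fun _ _ ↦ mul_mem) A
  fin_cases i <;> fin_cases j
  · exact absurd rfl hij
  · exact Subgroup.zpowers_le.2 (Subgroup.subset_closure (by simp))
      (transvection_mem_zpowers _ hb a)
  · exact Subgroup.zpowers_le.2 (Subgroup.subset_closure (by simp))
      (transvection_mem_zpowers _ hc a)
  · exact absurd rfl hij

lemma orderOf_mk_of_trace_eq_neg_two {M : SL(2, ZMod p)}
    (htr : (M : Matrix (Fin 2) (Fin 2) (ZMod p)).trace = -2) (h01 : M 0 1 ≠ 0) :
    orderOf (M : PSL(2, ZMod p)) = p := by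
  apply orderOf_eq_prime
  · rw [← QuotientGroup.mk_pow, QuotientGroup.eq_one_iff, mem_center_iff]
    refine ⟨-1, by simp, ?_⟩
    rw [map_neg, map_one, coe_pow, pow_char_eq_neg_one_of_trace_eq_neg_two p M.2 htr]
  · rw [Ne, QuotientGroup.eq_one_iff]
    exact fun hM ↦ h01 (apply_eq_zero_of_mem_center hM zero_ne_one)

end SpecialLinearGroup

end Matrix

namespace Matrix.ProjectiveSpecialLinearGroup

theorem exists_generating_triple_orderOf_eq_char {p : ℕ} [Fact p.Prime] (hp : p ≠ 2) :
    ∃ x y z : PSL(2, ZMod p), orderOf x = p ∧ orderOf y = p ∧ orderOf z = p ∧ x * y * z = 1 ∧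
      Subgroup.closure {x, y, z} = ⊤ := by
  have h2 : (2 : ZMod p) ≠ 0 := Ring.two_ne_zero (by rwa [ZMod.ringChar_zmod_n])
  have h2' : (-2 : ZMod p) ≠ 0 := neg_ne_zero.2 h2
  refine ⟨_, _, _, SpecialLinearGroup.orderOf_mk_transvection zero_ne_one h2,
    SpecialLinearGroup.orderOf_mk_transvection one_ne_zero h2', ?_, mul_inv_cancel _, ?_⟩
  · rw [orderOf_inv, ← QuotientGroup.mk_mul]
    apply SpecialLinearGroup.orderOf_mk_of_trace_eq_neg_two
    · rw [SpecialLinearGroup.transvection_mul_transvection_coe, trace_fin_two_of]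
      ring
    · rwa [SpecialLinearGroup.transvection_mul_transvection_coe]
  · rw [eq_top_iff, ← Subgroup.map_top_of_surjective _ (QuotientGroup.mk'_surjective _),
      ← SpecialLinearGroup.closure_transvection_pair_eq_top h2 h2', MonoidHom.map_closure,
      Set.image_pair]
    exact Subgroup.closure_mono
      (Set.insert_subset_insert (Set.singleton_subset_iff.2 (Set.mem_insert _ _)))

end Matrix.ProjectiveSpecialLinearGroup

/-- `(0; 11, 11, 11)` is a signature of `PSL(2, 𝔽₁₁)`. -/
theorem signature_0_11_11_11_PSL2_F11 :
    ∃ x y z : Matrix.ProjectiveSpecialLinearGroup (Fin 2) (ZMod 11),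
      orderOf x = 11 ∧ orderOf y = 11 ∧ orderOf z = 11 ∧ x * y * z = 1 ∧
      Subgroup.closure {x, y, z} = ⊤ := by
  have : Fact (Nat.Prime 11) := ⟨by norm_num⟩
  exact Matrix.ProjectiveSpecialLinearGroup.exists_generating_triple_orderOf_eq_char (by norm_num)
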